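/- arXiv:2301.06852 — 3 statements merged into one kernel-verified Lean document; each statement's English description precedes it below -/
import Mathlib

section
/- Let β > 1, t > 0 and constants 0 < a ≤ b, c₁ > 0, c₂ > 0, C > 0 be given. Suppose that for each h ∈ (0,1) we are given real numbers d(h) ≥ 1 and p(h) > 0 such that a ≤ h·d(h) ≤ b and such that the two-sided bound (2π)^{-1/2} · exp(−C·h^{β−2}·t) · (c₁·h^{β−2}·t / d(h))^{d(h)} ≤ p(h) ≤ exp(C·h^{β−2}·t + 1) · (c₂·h^{β−2}·t / d(h))^{d(h)} holds. Then lim_{h→0⁺} [ (h / log(h^{β−1})) · log p(h) − h·d(h) ] = 0. -/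
open Filter Set Real Topology

/-!
Write `x = h d(h)` and `λ = (β - 1) log h`. Since `h^(β-2) / d = h^(β-1) / x`, taking logarithms in
the two-sided bound and multiplying by `h` gives `h log p - λ x` between two expressions of the form
`h log E + x log (c t / x)`, with `E` the exponential prefactor. Both terms are bounded for
`0 < x ≤ b` and `0 < h < 1`: `h · h^(β-2) = h^(β-1) ≤ 1`, and `x log (c t / x)` lies between
`-x² / (c t)` and `c t`. So `h log p - λ x` stays bounded while `λ → -∞`, and dividing by `λ`
gives the limit.
-/

lemma log_mul_rpow_sub_two_mul_div {β c t h D : ℝ} (hc : 0 < c) (ht : 0 < t) (hh : 0 < h)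
    (hD : 0 < D) :
    log (c * h ^ (β - 2) * t / D) = log (c * t / (h * D)) + (β - 1) * log h := by
  have hsplit : c * h ^ (β - 2) * t / D = c * t / (h * D) * h ^ (β - 1) := by
    rw [show β - 2 = β - 1 - 1 by ring, rpow_sub_one hh.ne']
    field_simp
  rw [hsplit, log_mul (by positivity) (by positivity), log_rpow hh]

lemma mul_log_mul_rpow_sub_two_mul_div_rpow {β c t h D E : ℝ} (hc : 0 < c) (ht : 0 < t)
    (hh : 0 < h) (hD : 0 < D) (hE : 0 < E) :
    h * log (E * (c * h ^ (β - 2) * t / D) ^ D) - (β - 1) * log h * (h * D)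
      = h * log E + h * D * log (c * t / (h * D)) := by
  rw [log_mul hE.ne' (by positivity), log_rpow (by positivity),
    log_mul_rpow_sub_two_mul_div hc ht hh hD]
  ring

lemma mul_log_div_le {k x : ℝ} (hk : 0 < k) (hx : 0 < x) : x * log (k / x) ≤ k :=
  calc x * log (k / x) ≤ x * (k / x - 1) :=
        mul_le_mul_of_nonneg_left (log_le_sub_one_of_pos (div_pos hk hx)) hx.le
    _ = k - x := by field_simp
    _ ≤ k := by linarith

lemma neg_sq_div_le_mul_log_div {k x : ℝ} (hk : 0 < k) (hx : 0 < x) :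
    -(x ^ 2 / k) ≤ x * log (k / x) := by
  have hlog := one_sub_inv_le_log_of_pos (div_pos hk hx)
  rw [inv_div] at hlog
  calc -(x ^ 2 / k) ≤ x * (1 - x / k) := by
        rw [mul_sub, mul_one, mul_div_assoc', ← sq]
        linarith
    _ ≤ x * log (k / x) := mul_le_mul_of_nonneg_left hlog hx.le

lemma mul_rpow_sub_two_le_one {β h : ℝ} (hβ : 1 ≤ β) (hh : h ∈ Ioc 0 1) :
    h * h ^ (β - 2) ≤ 1 := by
  rw [show h * h ^ (β - 2) = h ^ (1 + (β - 2)) by rw [rpow_add hh.1, rpow_one]]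
  exact rpow_le_one hh.1.le hh.2 (by linarith)

lemma mul_log_sub_le_of_le_exp_mul_rpow {β t c C h D P : ℝ} (hβ : 1 ≤ β) (ht : 0 < t)
    (hc : 0 < c) (hC : 0 ≤ C) (hh : h ∈ Ioc 0 1) (hD : 0 < D) (hP : 0 < P)
    (hle : P ≤ exp (C * h ^ (β - 2) * t + 1) * (c * h ^ (β - 2) * t / D) ^ D) :
    h * log P - (β - 1) * log h * (h * D) ≤ C * t + 1 + c * t :=
  calc h * log P - (β - 1) * log h * (h * D)
        ≤ h * log (exp (C * h ^ (β - 2) * t + 1) * (c * h ^ (β - 2) * t / D) ^ D)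
          - (β - 1) * log h * (h * D) :=
        sub_le_sub_right (mul_le_mul_of_nonneg_left (log_le_log hP hle) hh.1.le) _
    _ = C * t * (h * h ^ (β - 2)) + h + h * D * log (c * t / (h * D)) := by
        rw [mul_log_mul_rpow_sub_two_mul_div_rpow hc ht hh.1 hD (exp_pos _), log_exp]
        ring
    _ ≤ C * t + 1 + c * t :=
        add_le_add (add_le_add
          (mul_le_of_le_one_right (by positivity) (mul_rpow_sub_two_le_one hβ hh)) hh.2)
          (mul_log_div_le (mul_pos hc ht) (mul_pos hh.1 hD))

lemma le_mul_log_sub_of_mul_exp_mul_rpow_le {β t b c C A h D P : ℝ} (hβ : 1 ≤ β) (ht : 0 < t)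
    (hc : 0 < c) (hC : 0 ≤ C) (hA : 0 < A) (hh : h ∈ Ioc 0 1) (hD : 0 < D) (hb : h * D ≤ b)
    (hle : A * exp (-(C * h ^ (β - 2) * t)) * (c * h ^ (β - 2) * t / D) ^ D ≤ P) :
    -(|log A| + C * t + b ^ 2 / (c * t)) ≤ h * log P - (β - 1) * log h * (h * D) := by
  have h0 : 0 < h := hh.1
  have hx : 0 < h * D := mul_pos h0 hD
  have hlogA : -|log A| ≤ h * log A := by
    have : |h * log A| ≤ |log A| := by
      rw [abs_mul, abs_of_pos hh.1]
      exact mul_le_of_le_one_left (abs_nonneg _) hh.2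
    linarith [neg_abs_le (h * log A)]
  have hexp : C * t * (h * h ^ (β - 2)) ≤ C * t :=
    mul_le_of_le_one_right (by positivity) (mul_rpow_sub_two_le_one hβ hh)
  have hx2 : (h * D) ^ 2 / (c * t) ≤ b ^ 2 / (c * t) := by gcongr
  calc -(|log A| + C * t + b ^ 2 / (c * t))
        ≤ h * log A - C * t * (h * h ^ (β - 2)) + -((h * D) ^ 2 / (c * t)) := by linarith
    _ ≤ h * log A - C * t * (h * h ^ (β - 2)) + h * D * log (c * t / (h * D)) := by
        gcongr
        exact neg_sq_div_le_mul_log_div (mul_pos hc ht) hx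
    _ = h * log (A * exp (-(C * h ^ (β - 2) * t)) * (c * h ^ (β - 2) * t / D) ^ D)
          - (β - 1) * log h * (h * D) := by
        rw [mul_log_mul_rpow_sub_two_mul_div_rpow hc ht hh.1 hD (by positivity),
          log_mul hA.ne' (exp_pos _).ne', log_exp]
        ring
    _ ≤ h * log P - (β - 1) * log h * (h * D) := by
        gcongr

theorem graph_regime_core_general (β t b c₁ c₂ C : ℝ) (hβ : 1 < β) (ht : 0 < t)
    (hc₁ : 0 < c₁) (hc₂ : 0 < c₂) (hC : 0 < C)
    (d p : ℝ → ℝ)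
    (hd : ∀ h ∈ Set.Ioo (0:ℝ) 1, 1 ≤ d h)
    (hp : ∀ h ∈ Set.Ioo (0:ℝ) 1, 0 < p h)
    (hup : ∀ h ∈ Set.Ioo (0:ℝ) 1, h * d h ≤ b)
    (hbound₁ : ∀ h ∈ Set.Ioo (0:ℝ) 1,
      (2 * Real.pi) ^ (-(1:ℝ)/2) * Real.exp (-(C * h ^ (β - 2) * t)) *
        (c₁ * h ^ (β - 2) * t / d h) ^ (d h) ≤ p h)
    (hbound₂ : ∀ h ∈ Set.Ioo (0:ℝ) 1,
      p h ≤ Real.exp (C * h ^ (β - 2) * t + 1) *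
        (c₂ * h ^ (β - 2) * t / d h) ^ (d h)) :
    Filter.Tendsto
      (fun h : ℝ => h / Real.log (h ^ (β - 1)) * Real.log (p h) - h * d h)
      (nhdsWithin 0 (Set.Ioi 0)) (nhds 0) := by
  set B : ℝ → ℝ := fun h => h * log (p h) - (β - 1) * log h * (h * d h) with hB
  have hIoo : ∀ᶠ h in 𝓝[>] (0:ℝ), h ∈ Ioo 0 1 := Ioo_mem_nhdsGT one_pos
  have hB_bdd : IsBoundedUnder (· ≤ ·) (𝓝[>] 0) (norm ∘ B) := by
    simp only [Function.comp_def, norm_eq_abs]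
    refine isBoundedUnder_le_abs.mpr
      ⟨isBoundedUnder_of_eventually_le (a := C * t + 1 + c₂ * t) (hIoo.mono fun h hh => ?_),
        isBoundedUnder_of_eventually_ge
          (a := -(|log ((2 * π) ^ (-(1:ℝ)/2))| + C * t + b ^ 2 / (c₁ * t)))
          (hIoo.mono fun h hh => ?_)⟩
    · exact mul_log_sub_le_of_le_exp_mul_rpow hβ.le ht hc₂ hC.le (Ioo_subset_Ioc_self hh)
        (by linarith [hd h hh]) (hp h hh) (hbound₂ h hh)
    · exact le_mul_log_sub_of_mul_exp_mul_rpow_le hβ.le ht hc₁ hC.le (by positivity)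
        (Ioo_subset_Ioc_self hh) (by linarith [hd h hh]) (hup h hh) (hbound₁ h hh)
  have hinv : Tendsto (fun h => ((β - 1) * log h)⁻¹) (𝓝[>] 0) (𝓝 0) :=
    (tendsto_log_nhdsGT_zero.const_mul_atBot (by linarith)).inv_tendsto_atBot
  refine (isBoundedUnder_le_mul_tendsto_zero hB_bdd hinv).congr' (hIoo.mono fun h hh => ?_)
  have : log h ≠ 0 := (log_neg hh.1 hh.2).ne
  have : β - 1 ≠ 0 := by linarith
  simp only [hB, log_rpow hh.1]
  field_simp

theorem graph_regime_core (β t a b c₁ c₂ C : ℝ) (hβ : 1 < β) (ht : 0 < t)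
    (ha : 0 < a) (hab : a ≤ b) (hc₁ : 0 < c₁) (hc₂ : 0 < c₂) (hC : 0 < C)
    (d p : ℝ → ℝ)
    (hd : ∀ h ∈ Set.Ioo (0:ℝ) 1, 1 ≤ d h)
    (hp : ∀ h ∈ Set.Ioo (0:ℝ) 1, 0 < p h)
    (hlow : ∀ h ∈ Set.Ioo (0:ℝ) 1, a ≤ h * d h)
    (hup : ∀ h ∈ Set.Ioo (0:ℝ) 1, h * d h ≤ b)
    (hbound₁ : ∀ h ∈ Set.Ioo (0:ℝ) 1,
      (2 * Real.pi) ^ (-(1:ℝ)/2) * Real.exp (-(C * h ^ (β - 2) * t)) *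
        (c₁ * h ^ (β - 2) * t / d h) ^ (d h) ≤ p h)
    (hbound₂ : ∀ h ∈ Set.Ioo (0:ℝ) 1,
      p h ≤ Real.exp (C * h ^ (β - 2) * t + 1) *
        (c₂ * h ^ (β - 2) * t / d h) ^ (d h)) :
    Filter.Tendsto
      (fun h : ℝ => h / Real.log (h ^ (β - 1)) * Real.log (p h) - h * d h)
      (nhdsWithin 0 (Set.Ioi 0)) (nhds 0) :=
  graph_regime_core_general β t b c₁ c₂ C hβ ht hc₁ hc₂ hC d p hd hp hup hbound₁ hbound₂
end

section
/- There exists a constant C > 0 such that for every ε > 0, the Lebesgue measure (on ℂ × ℂ ≅ ℝ⁴) of the set { (x, y) ∈ ℂ × ℂ : |x| ≤ 1, |y| ≤ 1, and there exists t ∈ [0,1] with |(1−t)·x + t·y| ≤ ε } is at most C·ε. -/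
/-!
If the segment from `x` to `y` passes through a point `z` with `‖z‖ ≤ ε`, then the cross product
`Im (conj x * y)` (twice the signed area of the triangle `0 x y`) equals `Im (conj z * (y - x))`,
so `|Im (conj x * y)| ≤ 2ε`. For fixed `x ≠ 0`, the `y` in the unit disk with
`|Im (conj x * y)| ≤ δ` lie in a rotated strip of width `2δ / ‖x‖` and length `2`, of area at
most `4δ / ‖x‖`, and `‖x‖⁻¹` is integrable on the unit disk of the plane.
-/

open MeasureTheory Metric Set ComplexConjugate

theorem locallyIntegrable_inv_norm {E : Type*} [NormedAddCommGroup E] [NormedSpace ℝ E]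
    [FiniteDimensional ℝ E] [MeasurableSpace E] [BorelSpace E] (μ : Measure E)
    [μ.IsAddHaarMeasure] (hE : 1 < Module.finrank ℝ E) :
    LocallyIntegrable (fun x : E ↦ ‖x‖⁻¹) μ := by
  refine locallyIntegrable_of_norm_le_rpow (C := 1) (α := 1) hE.le (by exact_mod_cast hE)
    (ae_of_all _ fun x ↦ ?_) (by fun_prop)
  simp [Real.rpow_neg_one]

namespace Complex

theorem volume_norm_le_one_abs_im_circle_mul_le (u : Circle) (h : ℝ) :
    volume {y : ℂ | ‖y‖ ≤ 1 ∧ |(u * y).im| ≤ h} ≤ ENNReal.ofReal (4 * h) := by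
  set R : Set ℂ := measurableEquivRealProd ⁻¹' (Icc (-1) 1 ×ˢ Icc (-h) h)
  have hR : MeasurableSet R :=
    measurableEquivRealProd.measurable (measurableSet_Icc.prod measurableSet_Icc)
  have hsub : {y : ℂ | ‖y‖ ≤ 1 ∧ |(u * y).im| ≤ h} ⊆ rotation u ⁻¹' R := by
    rintro y ⟨hy, hyh⟩
    have hre : |(u * y).re| ≤ 1 := by
      calc |(u * y).re| ≤ ‖(u : ℂ) * y‖ := abs_re_le_norm _
        _ = ‖y‖ := by rw [norm_mul, Circle.norm_coe, one_mul]
        _ ≤ 1 := hy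
    exact ⟨abs_le.1 hre, abs_le.1 hyh⟩
  calc _ ≤ volume (rotation u ⁻¹' R) := measure_mono hsub
    _ = volume (Icc (-1 : ℝ) 1 ×ˢ Icc (-h) h) := by
      rw [(rotation u).measurePreserving.measure_preimage hR.nullMeasurableSet,
        volume_preserving_equiv_real_prod.measure_preimage_equiv]
    _ = ENNReal.ofReal (4 * h) := by
      rw [Measure.volume_eq_prod, Measure.prod_prod, Real.volume_Icc, Real.volume_Icc,
        ← ENNReal.ofReal_mul (by norm_num)]
      ring_nf

theorem volume_norm_le_one_abs_im_mul_le {w : ℂ} (hw : w ≠ 0) (h : ℝ) :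
    volume {y : ℂ | ‖y‖ ≤ 1 ∧ |(w * y).im| ≤ h} ≤ ENNReal.ofReal (4 * h / ‖w‖) := by
  have hw' : 0 < ‖w‖ := norm_pos_iff.2 hw
  set u := Circle.exp (arg w)
  have him (y : ℂ) : (w * y).im = ‖w‖ * (u * y).im := by
    rw [← im_ofReal_mul, ← mul_assoc, Circle.coe_exp, norm_mul_exp_arg_mul_I]
  have hset : {y : ℂ | ‖y‖ ≤ 1 ∧ |(w * y).im| ≤ h} =
      {y : ℂ | ‖y‖ ≤ 1 ∧ |(u * y).im| ≤ h / ‖w‖} := by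
    ext y
    rw [mem_ofPred_eq, mem_ofPred_eq, him, abs_mul, abs_of_pos hw', ← le_div_iff₀' hw']
  rw [hset, mul_div_assoc]
  exact volume_norm_le_one_abs_im_circle_mul_le _ _

theorem abs_im_conj_mul_le_norm_lineMap_mul (x y : ℂ) (t : ℝ) :
    |(conj x * y).im| ≤ ‖(1 - t) • x + t • y‖ * ‖y - x‖ := by
  have hcross : (conj x * y).im = (conj ((1 - t) • x + t • y) * (y - x)).im := by
    simp only [real_smul, map_add, map_mul, conj_ofReal, mul_im, add_re, add_im, sub_re,
      sub_im, mul_re, conj_re, conj_im, ofReal_re, ofReal_im]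
    ring
  rw [hcross, ← RCLike.norm_conj ((1 - t) • x + t • y), ← norm_mul]
  exact abs_im_le_norm _

theorem lintegral_closedBall_inv_norm_lt_top :
    ∫⁻ x in closedBall (0 : ℂ) 1, ENNReal.ofReal ‖x‖⁻¹ < ⊤ :=
  ((locallyIntegrable_inv_norm volume (by simp)).integrableOn_isCompact
    (isCompact_closedBall 0 1)).lintegral_lt_top

end Complex

def crossBand (δ : ℝ) : Set (ℂ × ℂ) :=
  {p | ‖p.1‖ ≤ 1 ∧ ‖p.2‖ ≤ 1 ∧ |(conj p.1 * p.2).im| ≤ δ}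

theorem measurableSet_crossBand (δ : ℝ) : MeasurableSet (crossBand δ) := by
  unfold crossBand
  measurability

theorem volume_crossBand_le {δ : ℝ} (hδ : 0 ≤ δ) :
    volume (crossBand δ) ≤
      ENNReal.ofReal (4 * δ) * ∫⁻ x in closedBall (0 : ℂ) 1, ENNReal.ofReal ‖x‖⁻¹ := by
  have hslice_support : (fun x : ℂ ↦ volume (Prod.mk x ⁻¹' crossBand δ)).support ⊆
      closedBall 0 1 := by
    intro x hx
    by_contra hx1
    refine hx (measure_mono_null (fun y hy ↦ ?_) measure_empty)
    exact hx1 (mem_closedBall_zero_iff.2 hy.1)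
  have hslice : ∀ᵐ x : ℂ, volume (Prod.mk x ⁻¹' crossBand δ) ≤
      ENNReal.ofReal (4 * δ) * ENNReal.ofReal ‖x‖⁻¹ := by
    filter_upwards [compl_mem_ae_iff.2 (measure_singleton (0 : ℂ))] with x hx
    calc volume (Prod.mk x ⁻¹' crossBand δ)
        ≤ volume {y : ℂ | ‖y‖ ≤ 1 ∧ |(conj x * y).im| ≤ δ} :=
          measure_mono fun y hy ↦ hy.2
      _ ≤ ENNReal.ofReal (4 * δ / ‖conj x‖) :=
          Complex.volume_norm_le_one_abs_im_mul_le (by simpa using hx) δ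
      _ = ENNReal.ofReal (4 * δ) * ENNReal.ofReal ‖x‖⁻¹ := by
          rw [RCLike.norm_conj, div_eq_mul_inv, ENNReal.ofReal_mul (by positivity)]
  rw [Measure.volume_eq_prod, Measure.prod_apply (measurableSet_crossBand δ),
    ← setLIntegral_eq_of_support_subset hslice_support,
    ← lintegral_const_mul' _ _ ENNReal.ofReal_ne_top]
  exact lintegral_mono_ae (ae_restrict_of_ae hslice)

theorem line_crossing_measure_bound :
    ∃ C : ℝ, 0 < C ∧ ∀ ε : ℝ, 0 < ε →
      MeasureTheory.volume
          {p : ℂ × ℂ | ‖p.1‖ ≤ 1 ∧ ‖p.2‖ ≤ 1 ∧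
            ∃ t ∈ Set.Icc (0:ℝ) 1, ‖(1 - t) • p.1 + t • p.2‖ ≤ ε}
        ≤ ENNReal.ofReal (C * ε) := by
  set K := ∫⁻ x in closedBall (0 : ℂ) 1, ENNReal.ofReal ‖x‖⁻¹
  have hK : K ≠ ⊤ := Complex.lintegral_closedBall_inv_norm_lt_top.ne
  refine ⟨8 * K.toReal + 1, by positivity, fun ε hε ↦ ?_⟩
  have hsub : {p : ℂ × ℂ | ‖p.1‖ ≤ 1 ∧ ‖p.2‖ ≤ 1 ∧
      ∃ t ∈ Set.Icc (0:ℝ) 1, ‖(1 - t) • p.1 + t • p.2‖ ≤ ε} ⊆ crossBand (2 * ε) := by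
    rintro ⟨x, y⟩ ⟨hx, hy, t, -, hxy⟩
    refine ⟨hx, hy, (Complex.abs_im_conj_mul_le_norm_lineMap_mul x y t).trans ?_⟩
    nlinarith [norm_sub_le y x, norm_nonneg ((1 - t) • x + t • y)]
  calc _ ≤ volume (crossBand (2 * ε)) := measure_mono hsub
    _ ≤ ENNReal.ofReal (4 * (2 * ε)) * K := volume_crossBand_le (by positivity)
    _ = ENNReal.ofReal (8 * ε * K.toReal) := by
      rw [ENNReal.ofReal_mul (by positivity : (0 : ℝ) ≤ 8 * ε), ENNReal.ofReal_toReal hK]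
      ring_nf
    _ ≤ ENNReal.ofReal ((8 * K.toReal + 1) * ε) :=
      ENNReal.ofReal_le_ofReal (by nlinarith)
end

section
/- Consider the grid graph on ℤ × ℤ, the simple graph in which two vertices u = (u₁,u₂) and v = (v₁,v₂) are adjacent if and only if |u₁ − v₁| + |u₂ − v₂| = 1, with combinatorial graph distance d and combinatorial balls B_n(u) = {v : d(u,v) ≤ n}. There exists a constant C > 0 such that for every u ∈ ℤ × ℤ, every natural number n ≥ 1 and every function f : ℤ × ℤ → ℝ, one has Σ_{v ∈ B_n(u)} (f(v) − f̄)² ≤ C·n²·Σ (f(w) − f(v))², where f̄ = (#B_n(u))^{-1}·Σ_{v ∈ B_n(u)} f(v) and the sum on the right-hand side ranges over all ordered pairs (v,w) of adjacent vertices with v, w ∈ B_{2n}(u). -/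
/-- The grid graph on `ℤ × ℤ`: two vertices are adjacent iff their ℓ¹-distance is 1. -/
def gridGraph : SimpleGraph (ℤ × ℤ) where
  Adj u v := |u.1 - v.1| + |u.2 - v.2| = 1
  symm := by
    constructor
    intro u v h
    simpa [abs_sub_comm] using h
  loopless := by
    constructor
    intro u h
    simp at h

instance : DecidableRel gridGraph.Adj :=
  fun u v => inferInstanceAs (Decidable (|u.1 - v.1| + |u.2 - v.2| = 1))

/-!
Graph distance on the grid is the ℓ¹ distance (the grid is the box product of two copies of the
Hasse graph of `ℤ`), so `B_n(u)` lies in the square of radius `n` around `u`, which in turn lies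
in `B_{2n}(u)`. The variance over `B_n(u)` is at most `N⁻¹ ∑_{v,w} (f v - f w)²`, where
`N = #B_n(u)`. Joining `v` to `w` inside the square by a horizontal and then a vertical segment,
Cauchy–Schwarz along each segment bounds `(f v - f w)²` by `4n` times the energies of one row and
one column of the square. Each row and each column of the square is charged at most `(2n + 1) N`
times in total, which gives the constant `8n(2n + 1) ≤ 24n²`.
-/

open Finset SimpleGraph

lemma hasse_int_adj {a b : ℤ} : (hasse ℤ).Adj a b ↔ (a - b).natAbs = 1 := by
  rw [hasse_adj, Order.covBy_iff_add_one_eq, Order.covBy_iff_add_one_eq]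
  omega

lemma natAbs_sub_le_length {a b : ℤ} (p : (hasse ℤ).Walk a b) :
    (a - b).natAbs ≤ p.length := by
  induction p with
  | nil => simp
  | cons h p ih =>
    rw [hasse_int_adj] at h
    rw [Walk.length_cons]
    omega

lemma exists_walk_add_length_eq (a : ℤ) (k : ℕ) :
    ∃ p : (hasse ℤ).Walk a (a + k), p.length = k := by
  induction k with
  | zero => exact ⟨Walk.nil.copy rfl (by simp), by simp⟩
  | succ k ih =>
    obtain ⟨p, hp⟩ := ih
    have h : (hasse ℤ).Adj (a + k) (a + ↑(k + 1)) := by rw [hasse_int_adj]; omega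
    exact ⟨p.concat h, by simp [hp]⟩

lemma edist_hasse_int (a b : ℤ) : (hasse ℤ).edist a b = (a - b).natAbs := by
  wlog hab : a ≤ b generalizing a b
  · rw [edist_comm, this b a (by omega), ← Int.natAbs_neg, neg_sub]
  refine le_antisymm ?_ ?_
  · obtain ⟨p, hp⟩ := exists_walk_add_length_eq a (b - a).toNat
    have hb : a + ((b - a).toNat : ℤ) = b := by omega
    calc (hasse ℤ).edist a b = (hasse ℤ).edist a (a + ((b - a).toNat : ℤ)) := by rw [hb]
      _ ≤ p.length := edist_le p
      _ = (a - b).natAbs := by rw [hp]; norm_cast; omega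
  · obtain ⟨p, hp⟩ := (hasse_preconnected_of_succ ℤ a b).exists_walk_length_eq_edist
    rw [← hp]
    exact_mod_cast natAbs_sub_le_length p

lemma gridGraph_eq_boxProd : gridGraph = hasse ℤ □ hasse ℤ := by
  ext u v
  rw [boxProd_adj, hasse_int_adj, hasse_int_adj]
  change |u.1 - v.1| + |u.2 - v.2| = 1 ↔ _
  rw [Int.abs_eq_natAbs, Int.abs_eq_natAbs]
  omega

lemma gridGraph_dist (u v : ℤ × ℤ) :
    gridGraph.dist u v = (u.1 - v.1).natAbs + (u.2 - v.2).natAbs := by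
  rw [SimpleGraph.dist, gridGraph_eq_boxProd, edist_boxProd, edist_hasse_int, edist_hasse_int]
  norm_cast

lemma sum_sq_sub_mean_le {ι : Type*} (s : Finset ι) (f : ι → ℝ) :
    ∑ v ∈ s, (f v - (#s : ℝ)⁻¹ * ∑ w ∈ s, f w) ^ 2 ≤
      (#s : ℝ)⁻¹ * ∑ v ∈ s, ∑ w ∈ s, (f v - f w) ^ 2 := by
  rw [mul_sum s (fun v => ∑ w ∈ s, (f v - f w) ^ 2)]
  refine sum_le_sum fun v hv => ?_
  have hs : (#s : ℝ) ≠ 0 := by exact_mod_cast (card_pos.2 ⟨v, hv⟩).ne'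
  have hmean : f v - (#s : ℝ)⁻¹ * ∑ w ∈ s, f w = (∑ w ∈ s, (f v - f w)) / #s := by
    rw [sum_sub_distrib, sum_const, nsmul_eq_mul]
    field_simp
  rw [hmean, inv_mul_eq_div]
  exact sum_div_card_sq_le_sum_sq_div_card

theorem Int.sum_Ico_sub {M : Type*} [AddCommGroup M] (g : ℤ → M) {a b : ℤ} (hab : a ≤ b) :
    ∑ t ∈ Ico a b, (g (t + 1) - g t) = g b - g a := by
  induction b, hab using Int.leInduction with
  | base => simp
  | succ b hab ih =>
    rw [← insert_Ico_right_eq_Ico_add_one hab, sum_insert right_notMem_Ico, ih]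
    abel

noncomputable def segmentEnergy (g : ℤ → ℝ) (a b : ℤ) : ℝ :=
  ∑ t ∈ Ico a b, (g (t + 1) - g t) ^ 2

lemma segmentEnergy_nonneg (g : ℤ → ℝ) (a b : ℤ) : 0 ≤ segmentEnergy g a b :=
  sum_nonneg fun _ _ => sq_nonneg _

lemma segmentEnergy_mono (g : ℤ → ℝ) {a b c d : ℤ} (hca : c ≤ a) (hbd : b ≤ d) :
    segmentEnergy g a b ≤ segmentEnergy g c d :=
  sum_le_sum_of_subset_of_nonneg (Ico_subset_Ico hca hbd) fun _ _ _ => sq_nonneg _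

lemma sq_sub_le_segmentEnergy (g : ℤ → ℝ) {a b x y : ℤ} (hx : x ∈ Icc a b)
    (hy : y ∈ Icc a b) :
    (g x - g y) ^ 2 ≤ ((b - a : ℤ) : ℝ) * segmentEnergy g a b := by
  wlog hxy : y ≤ x generalizing x y
  · rw [← neg_sub, neg_sq]
    exact this hy hx (by omega)
  rw [mem_Icc] at hx hy
  calc (g x - g y) ^ 2 = (∑ t ∈ Ico y x, (g (t + 1) - g t)) ^ 2 := by rw [Int.sum_Ico_sub g hxy]
    _ ≤ #(Ico y x) * segmentEnergy g y x := sq_sum_le_card_mul_sum_sq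
    _ ≤ ((b - a : ℤ) : ℝ) * segmentEnergy g a b := by
      refine mul_le_mul ?_ (segmentEnergy_mono g hy.1 hx.2) (segmentEnergy_nonneg g y x)
        (by exact_mod_cast (by omega : 0 ≤ b - a))
      rw [Int.card_Ico]
      exact_mod_cast (by omega : ((x - y).toNat : ℤ) ≤ b - a)

noncomputable def dirichletEnergy {V : Type*} (G : SimpleGraph V) [DecidableRel G.Adj]
    (T : Finset V) (f : V → ℝ) : ℝ :=
  ∑ v ∈ T, ∑ w ∈ T, if G.Adj v w then (f w - f v) ^ 2 else 0

section DirichletEnergy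

variable {V : Type*} {G : SimpleGraph V} [DecidableRel G.Adj] {T : Finset V} (f : V → ℝ)

lemma dirichletEnergy_nonneg : 0 ≤ dirichletEnergy G T f :=
  sum_nonneg fun _ _ => sum_nonneg fun _ _ => by split_ifs <;> positivity

lemma sum_sq_le_dirichletEnergy {ι : Type*} {s : Finset ι} {e : ι → V × V}
    (he : Set.InjOn e s) (hadj : ∀ i ∈ s, G.Adj (e i).1 (e i).2)
    (hT : ∀ i ∈ s, (e i).1 ∈ T ∧ (e i).2 ∈ T) :
    ∑ i ∈ s, (f (e i).2 - f (e i).1) ^ 2 ≤ dirichletEnergy G T f := by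
  classical
  let g : V × V → ℝ := fun p => if G.Adj p.1 p.2 then (f p.2 - f p.1) ^ 2 else 0
  calc ∑ i ∈ s, (f (e i).2 - f (e i).1) ^ 2 = ∑ p ∈ s.image e, g p := by
        rw [sum_image he]
        exact sum_congr rfl fun i hi => (if_pos (hadj i hi)).symm
    _ ≤ ∑ p ∈ T ×ˢ T, g p := by
        refine sum_le_sum_of_subset_of_nonneg (fun p hp => ?_) fun p _ _ => ?_
        · obtain ⟨i, hi, rfl⟩ := mem_image.1 hp
          exact mem_product.2 (hT i hi)
        · dsimp only [g]
          split_ifs <;> positivity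
    _ = dirichletEnergy G T f := sum_product ..

end DirichletEnergy

noncomputable def gridSquare (u : ℤ × ℤ) (r : ℕ) : Finset (ℤ × ℤ) :=
  Icc (u.1 - r) (u.1 + r) ×ˢ Icc (u.2 - r) (u.2 + r)

noncomputable def rowEnergy (f : ℤ × ℤ → ℝ) (u : ℤ × ℤ) (r : ℕ) (y : ℤ) : ℝ :=
  segmentEnergy (fun t => f (t, y)) (u.1 - r) (u.1 + r)

noncomputable def colEnergy (f : ℤ × ℤ → ℝ) (u : ℤ × ℤ) (r : ℕ) (x : ℤ) : ℝ :=
  segmentEnergy (fun t => f (x, t)) (u.2 - r) (u.2 + r)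

lemma card_Icc_sub_add (a : ℤ) (r : ℕ) : #(Icc (a - r) (a + r)) = 2 * r + 1 := by
  rw [Int.card_Icc]
  omega

section GridSquare

variable {u v : ℤ × ℤ} {r : ℕ}

lemma mem_gridSquare_of_dist_le (h : gridGraph.dist u v ≤ r) : v ∈ gridSquare u r := by
  rw [gridGraph_dist] at h
  simp only [gridSquare, mem_product, mem_Icc]
  omega

lemma dist_le_of_mem_gridSquare (h : v ∈ gridSquare u r) : gridGraph.dist u v ≤ 2 * r := by
  simp only [gridSquare, mem_product, mem_Icc] at h
  rw [gridGraph_dist]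
  omega

variable (f : ℤ × ℤ → ℝ) {T : Finset (ℤ × ℤ)}

lemma sum_rowEnergy_le (hT : gridSquare u r ⊆ T) :
    ∑ y ∈ Icc (u.2 - r) (u.2 + r), rowEnergy f u r y ≤ dirichletEnergy gridGraph T f := by
  simp only [rowEnergy, segmentEnergy]
  rw [← sum_product']
  refine sum_sq_le_dirichletEnergy f (e := fun q : ℤ × ℤ => ((q.2, q.1), (q.2 + 1, q.1)))
    (fun q _ q' _ h => ?_) (fun q _ => ?_) (fun q hq => ?_)
  · simp only [Prod.ext_iff] at h
    exact Prod.ext h.1.2 h.1.1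
  · show |_| + |_| = 1
    simp
  · simp only [mem_product, mem_Icc, mem_Ico] at hq
    constructor <;> apply hT <;> simp only [gridSquare, mem_product, mem_Icc] <;> omega

lemma sum_colEnergy_le (hT : gridSquare u r ⊆ T) :
    ∑ x ∈ Icc (u.1 - r) (u.1 + r), colEnergy f u r x ≤ dirichletEnergy gridGraph T f := by
  simp only [colEnergy, segmentEnergy]
  rw [← sum_product']
  refine sum_sq_le_dirichletEnergy f (e := fun q : ℤ × ℤ => ((q.1, q.2), (q.1, q.2 + 1)))
    (fun q _ q' _ h => ?_) (fun q _ => ?_) (fun q hq => ?_)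
  · simp only [Prod.ext_iff] at h
    exact Prod.ext h.1.1 h.1.2
  · show |_| + |_| = 1
    simp
  · simp only [mem_product, mem_Icc, mem_Ico] at hq
    constructor <;> apply hT <;> simp only [gridSquare, mem_product, mem_Icc] <;> omega

lemma sq_sub_le_rowEnergy_add_colEnergy {w : ℤ × ℤ} (hv : v ∈ gridSquare u r)
    (hw : w ∈ gridSquare u r) :
    (f v - f w) ^ 2 ≤ 4 * r * (rowEnergy f u r v.2 + colEnergy f u r w.1) := by
  rw [gridSquare, mem_product] at hv hw
  have hlen (a : ℤ) : (((a + r) - (a - r) : ℤ) : ℝ) = 2 * r := by push_cast; ring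
  have hrow := sq_sub_le_segmentEnergy (fun t => f (t, v.2)) hv.1 hw.1
  have hcol := sq_sub_le_segmentEnergy (fun t => f (w.1, t)) hv.2 hw.2
  rw [hlen] at hrow hcol
  calc (f v - f w) ^ 2 = ((f (v.1, v.2) - f (w.1, v.2)) + (f (w.1, v.2) - f (w.1, w.2))) ^ 2 := by
        ring
    _ ≤ 2 * ((f (v.1, v.2) - f (w.1, v.2)) ^ 2 + (f (w.1, v.2) - f (w.1, w.2)) ^ 2) := add_sq_le
    _ ≤ _ := by rw [rowEnergy, colEnergy]; linarith

lemma sum_rowEnergy_snd_le {S : Finset (ℤ × ℤ)} (hS : S ⊆ gridSquare u r)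
    (hT : gridSquare u r ⊆ T) :
    ∑ v ∈ S, rowEnergy f u r v.2 ≤ (2 * r + 1) * dirichletEnergy gridGraph T f := by
  calc _ ≤ ∑ v ∈ gridSquare u r, rowEnergy f u r v.2 :=
        sum_le_sum_of_subset_of_nonneg hS fun _ _ _ => segmentEnergy_nonneg _ _ _
    _ = (2 * r + 1) * ∑ y ∈ Icc (u.2 - r) (u.2 + r), rowEnergy f u r y := by
        simp only [gridSquare, sum_product, sum_const, card_Icc_sub_add, nsmul_eq_mul]
        push_cast; ring
    _ ≤ _ := by gcongr; exact sum_rowEnergy_le f hT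

lemma sum_colEnergy_fst_le {S : Finset (ℤ × ℤ)} (hS : S ⊆ gridSquare u r)
    (hT : gridSquare u r ⊆ T) :
    ∑ w ∈ S, colEnergy f u r w.1 ≤ (2 * r + 1) * dirichletEnergy gridGraph T f := by
  calc _ ≤ ∑ w ∈ gridSquare u r, colEnergy f u r w.1 :=
        sum_le_sum_of_subset_of_nonneg hS fun _ _ _ => segmentEnergy_nonneg _ _ _
    _ = (2 * r + 1) * ∑ x ∈ Icc (u.1 - r) (u.1 + r), colEnergy f u r x := by
        simp only [gridSquare, sum_product_right, sum_const, card_Icc_sub_add, nsmul_eq_mul]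
        push_cast; ring
    _ ≤ _ := by gcongr; exact sum_colEnergy_le f hT

lemma sum_sum_sq_sub_le {S : Finset (ℤ × ℤ)} (hS : S ⊆ gridSquare u r)
    (hT : gridSquare u r ⊆ T) :
    ∑ v ∈ S, ∑ w ∈ S, (f v - f w) ^ 2 ≤
      #S * (8 * r * (2 * r + 1) * dirichletEnergy gridGraph T f) := by
  calc ∑ v ∈ S, ∑ w ∈ S, (f v - f w) ^ 2
        ≤ ∑ v ∈ S, ∑ w ∈ S, 4 * r * (rowEnergy f u r v.2 + colEnergy f u r w.1) :=
        sum_le_sum fun v hv => sum_le_sum fun w hw =>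
          sq_sub_le_rowEnergy_add_colEnergy f (hS hv) (hS hw)
    _ = #S * (4 * r * (∑ v ∈ S, rowEnergy f u r v.2 + ∑ w ∈ S, colEnergy f u r w.1)) := by
        simp only [mul_add, sum_add_distrib, ← mul_sum, sum_const, nsmul_eq_mul]
        ring
    _ ≤ #S * (4 * r * ((2 * r + 1) * dirichletEnergy gridGraph T f +
          (2 * r + 1) * dirichletEnergy gridGraph T f)) := by
        gcongr
        · exact sum_rowEnergy_snd_le f hS hT
        · exact sum_colEnergy_fst_le f hS hT
    _ = _ := by ring

end GridSquare

theorem grid_poincare_inequality :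
    ∃ C : ℝ, 0 < C ∧
      ∀ (u : ℤ × ℤ) (n : ℕ), 1 ≤ n →
        ∀ (hB : {v : ℤ × ℤ | gridGraph.dist u v ≤ n}.Finite)
          (hB2 : {v : ℤ × ℤ | gridGraph.dist u v ≤ 2 * n}.Finite)
          (f : ℤ × ℤ → ℝ),
          (∑ v ∈ hB.toFinset,
              (f v - (hB.toFinset.card : ℝ)⁻¹ * ∑ w ∈ hB.toFinset, f w) ^ 2)
            ≤ C * (n : ℝ) ^ 2 *
                ∑ v ∈ hB2.toFinset, ∑ w ∈ hB2.toFinset,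
                  if gridGraph.Adj v w then (f w - f v) ^ 2 else 0 := by
  refine ⟨24, by norm_num, fun u n hn hB hB2 f => ?_⟩
  set S := hB.toFinset
  have hS : S ⊆ gridSquare u n := fun v hv => mem_gridSquare_of_dist_le (by simpa [S] using hv)
  have hT : gridSquare u n ⊆ hB2.toFinset := fun v hv => by
    simpa using dist_le_of_mem_gridSquare hv
  have hcard : (0 : ℝ) < #S := by
    exact_mod_cast card_pos.2 ⟨u, by simp [S]⟩
  set E := dirichletEnergy gridGraph hB2.toFinset f
  have hE : 0 ≤ E := dirichletEnergy_nonneg f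
  have hn' : (1 : ℝ) ≤ n := by exact_mod_cast hn
  calc _ ≤ (#S : ℝ)⁻¹ * ∑ v ∈ S, ∑ w ∈ S, (f v - f w) ^ 2 := sum_sq_sub_mean_le S f
    _ ≤ (#S : ℝ)⁻¹ * (#S * (8 * n * (2 * n + 1) * E)) := by
        gcongr
        exact sum_sum_sq_sub_le f hS hT
    _ = 8 * n * (2 * n + 1) * E := by field_simp
    _ ≤ 24 * n ^ 2 * E := mul_le_mul_of_nonneg_right (by nlinarith) hE
end
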